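/- arXiv:2103.15159 — 3 statements merged into one kernel-verified Lean document; each statement's English description precedes it below -/
import Mathlib

section
/- For any field F and any 2-cochain β on {1,...,5}, if the triangle vectors e_s of the pentachoron 12345 are built from ω := ∂β, then Σ_s β_s e_s = 0 in F^3, the sum running over all ten triangles s of {1,...,5}. -/
open Finset

noncomputable section

/-- The value of `ω` on the 4-element vertex subset of the pentachoron `v`
obtained by omitting the vertex at position `r`. -/
def wOmit {F : Type*} [Field F] (ω : Finset ℕ → F) (v : Fin 5 → ℕ) (r : Fin 5) : F :=
  ω (Finset.image (fun p : Fin 4 => v (r.succAbove p)) Finset.univ)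

/-- The triangle vector `e_s` of the pentachoron with ordered vertices
`v 0 < v 1 < v 2 < v 3 < v 4`, built from the 3-cochain `ω`
(the zero vector if `s` is not a triangle of this pentachoron). -/
def pentV {F : Type*} [Field F] (ω : Finset ℕ → F) (v : Fin 5 → ℕ) (s : Finset ℕ) :
    Fin 3 → F :=
  if s = {v 0, v 1, v 2} then ![0, wOmit ω v 1, wOmit ω v 3 - wOmit ω v 4]
  else if s = {v 0, v 1, v 3} then ![0, 0, -wOmit ω v 3]
  else if s = {v 0, v 1, v 4} then ![0, -wOmit ω v 1, wOmit ω v 4]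
  else if s = {v 0, v 2, v 3} then ![wOmit ω v 0, -wOmit ω v 3, wOmit ω v 3]
  else if s = {v 0, v 2, v 4} then ![-wOmit ω v 0, wOmit ω v 1 + wOmit ω v 3, -wOmit ω v 4]
  else if s = {v 0, v 3, v 4} then ![wOmit ω v 0, -wOmit ω v 3, 0]
  else if s = {v 1, v 2, v 3} then ![-wOmit ω v 1, 0, -wOmit ω v 3]
  else if s = {v 1, v 2, v 4} then ![wOmit ω v 1, -wOmit ω v 1, wOmit ω v 4]
  else if s = {v 1, v 3, v 4} then ![-wOmit ω v 1, 0, 0]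
  else if s = {v 2, v 3, v 4} then ![wOmit ω v 1 - wOmit ω v 0, wOmit ω v 3, 0]
  else 0

/-- The triangle functional `f_s` (written as a row vector) of the pentachoron
with ordered vertices `v 0 < v 1 < v 2 < v 3 < v 4`, built from the 3-cochain `ω`
(zero if `s` is not a triangle of this pentachoron). -/
def pentF {F : Type*} [Field F] (ω : Finset ℕ → F) (v : Fin 5 → ℕ) (s : Finset ℕ) :
    Fin 3 → F :=
  let w := wOmit ω v
  if s = {v 0, v 1, v 2} then ![0, 0, 1 / (w 4 * w 3)]
  else if s = {v 0, v 1, v 3} then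
    ![1 / (w 2 * w 1), -((w 1 - w 0) / (w 3 * w 2 * w 1)), -((w 2 + w 4) / (w 4 * w 3 * w 2))]
  else if s = {v 0, v 1, v 4} then
    ![-(1 / (w 2 * w 1)), (w 1 - w 0) / (w 3 * w 2 * w 1), 1 / (w 3 * w 2)]
  else if s = {v 0, v 2, v 3} then ![0, 1 / (w 3 * w 1), 1 / (w 4 * w 3)]
  else if s = {v 0, v 2, v 4} then ![0, -(1 / (w 3 * w 1)), 0]
  else if s = {v 0, v 3, v 4} then
    ![1 / (w 2 * w 1), (w 3 - w 4) / (w 3 * w 2 * w 1), -(1 / (w 3 * w 2))]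
  else if s = {v 1, v 2, v 3} then
    ![-(1 / (w 1 * w 0)), -(1 / (w 3 * w 1)), -(1 / (w 4 * w 3))]
  else if s = {v 1, v 2, v 4} then ![1 / (w 1 * w 0), 1 / (w 3 * w 1), 0]
  else if s = {v 1, v 3, v 4} then
    ![-((w 0 + w 2) / (w 2 * w 1 * w 0)), -((w 3 - w 4) / (w 3 * w 2 * w 1)), 1 / (w 3 * w 2)]
  else if s = {v 2, v 3, v 4} then ![1 / (w 1 * w 0), 0, 0]
  else 0

/-- The simplicial coboundary of a 2-cochain `β`, evaluated on a 4-element subset `t`: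
`(∂β)_{ijkl} = β_{jkl} - β_{ikl} + β_{ijl} - β_{ijk}` for `i < j < k < l`. -/
def cobound {F : Type*} [Field F] (β : Finset ℕ → F) (t : Finset ℕ) : F :=
  ∑ x ∈ t, (-1 : F) ^ ((t.filter (fun y => y < x)).card) * β (t.erase x)

lemma hw0 {F : Type*} [Field F] (ω : Finset ℕ → F) :
    wOmit ω ![1,2,3,4,5] 0 = ω {2,3,4,5} := by
  have : (Finset.image (fun p : Fin 4 => (![1,2,3,4,5] : Fin 5 → ℕ) ((0:Fin 5).succAbove p)) Finset.univ) = ({2,3,4,5} : Finset ℕ) := by decide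
  rw [wOmit, this]

lemma hw1 {F : Type*} [Field F] (ω : Finset ℕ → F) :
    wOmit ω ![1,2,3,4,5] 1 = ω {1,3,4,5} := by
  have : (Finset.image (fun p : Fin 4 => (![1,2,3,4,5] : Fin 5 → ℕ) ((1:Fin 5).succAbove p)) Finset.univ) = ({1,3,4,5} : Finset ℕ) := by decide
  rw [wOmit, this]

lemma hw2 {F : Type*} [Field F] (ω : Finset ℕ → F) :
    wOmit ω ![1,2,3,4,5] 2 = ω {1,2,4,5} := by
  have : (Finset.image (fun p : Fin 4 => (![1,2,3,4,5] : Fin 5 → ℕ) ((2:Fin 5).succAbove p)) Finset.univ) = ({1,2,4,5} : Finset ℕ) := by decide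
  rw [wOmit, this]

lemma hw3 {F : Type*} [Field F] (ω : Finset ℕ → F) :
    wOmit ω ![1,2,3,4,5] 3 = ω {1,2,3,5} := by
  have : (Finset.image (fun p : Fin 4 => (![1,2,3,4,5] : Fin 5 → ℕ) ((3:Fin 5).succAbove p)) Finset.univ) = ({1,2,3,5} : Finset ℕ) := by decide
  rw [wOmit, this]

lemma hw4 {F : Type*} [Field F] (ω : Finset ℕ → F) :
    wOmit ω ![1,2,3,4,5] 4 = ω {1,2,3,4} := by
  have : (Finset.image (fun p : Fin 4 => (![1,2,3,4,5] : Fin 5 → ℕ) ((4:Fin 5).succAbove p)) Finset.univ) = ({1,2,3,4} : Finset ℕ) := by decide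
  rw [wOmit, this]

lemma hc0 {F : Type*} [Field F] (β : Finset ℕ → F) :
    cobound β {2,3,4,5} = β {3,4,5} - β {2,4,5} + β {2,3,5} - β {2,3,4} := by
  rw [cobound]
  rw [Finset.sum_insert (by decide), Finset.sum_insert (by decide), Finset.sum_insert (by decide), Finset.sum_singleton]
  norm_num [show Finset.filter (fun y => y < 2) ({2,3,4,5}:Finset ℕ) = ∅ from by decide, show Finset.filter (fun y => y < 3) ({2,3,4,5}:Finset ℕ) = {2} from by decide, show Finset.filter (fun y => y < 4) ({2,3,4,5}:Finset ℕ) = {2,3} from by decide, show Finset.filter (fun y => y < 5) ({2,3,4,5}:Finset ℕ) = {2,3,4} from by decide, show ({2,3,4,5}:Finset ℕ).erase 2 = {3,4,5} from by decide, show ({2,3,4,5}:Finset ℕ).erase 3 = {2,4,5} from by decide, show ({2,3,4,5}:Finset ℕ).erase 4 = {2,3,5} from by decide, show ({2,3,4,5}:Finset ℕ).erase 5 = {2,3,4} from by decide]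
  norm_num [Finset.filter_insert, Finset.filter_singleton]
  ring

lemma hc1 {F : Type*} [Field F] (β : Finset ℕ → F) :
    cobound β {1,3,4,5} = β {3,4,5} - β {1,4,5} + β {1,3,5} - β {1,3,4} := by
  rw [cobound]
  rw [Finset.sum_insert (by decide), Finset.sum_insert (by decide), Finset.sum_insert (by decide), Finset.sum_singleton]
  norm_num [show Finset.filter (fun y => y = 0) ({1,3,4,5}:Finset ℕ) = ∅ from by decide, show Finset.filter (fun y => y < 1) ({1,3,4,5}:Finset ℕ) = ∅ from by decide, show Finset.filter (fun y => y < 3) ({1,3,4,5}:Finset ℕ) = {1} from by decide, show Finset.filter (fun y => y < 4) ({1,3,4,5}:Finset ℕ) = {1,3} from by decide, show Finset.filter (fun y => y < 5) ({1,3,4,5}:Finset ℕ) = {1,3,4} from by decide, show ({1,3,4,5}:Finset ℕ).erase 1 = {3,4,5} from by decide, show ({1,3,4,5}:Finset ℕ).erase 3 = {1,4,5} from by decide, show ({1,3,4,5}:Finset ℕ).erase 4 = {1,3,5} from by decide, show ({1,3,4,5}:Finset ℕ).erase 5 = {1,3,4} from by decide]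
  ring

lemma hc2 {F : Type*} [Field F] (β : Finset ℕ → F) :
    cobound β {1,2,4,5} = β {2,4,5} - β {1,4,5} + β {1,2,5} - β {1,2,4} := by
  rw [cobound]
  rw [Finset.sum_insert (by decide), Finset.sum_insert (by decide), Finset.sum_insert (by decide), Finset.sum_singleton]
  norm_num [show Finset.filter (fun y => y = 0) ({1,2,4,5}:Finset ℕ) = ∅ from by decide, show Finset.filter (fun y => y < 1) ({1,2,4,5}:Finset ℕ) = ∅ from by decide, show Finset.filter (fun y => y < 2) ({1,2,4,5}:Finset ℕ) = {1} from by decide, show Finset.filter (fun y => y < 4) ({1,2,4,5}:Finset ℕ) = {1,2} from by decide, show Finset.filter (fun y => y < 5) ({1,2,4,5}:Finset ℕ) = {1,2,4} from by decide, show ({1,2,4,5}:Finset ℕ).erase 1 = {2,4,5} from by decide, show ({1,2,4,5}:Finset ℕ).erase 2 = {1,4,5} from by decide, show ({1,2,4,5}:Finset ℕ).erase 4 = {1,2,5} from by decide, show ({1,2,4,5}:Finset ℕ).erase 5 = {1,2,4} from by decide]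
  norm_num [Finset.filter_insert, Finset.filter_singleton]
  ring

lemma hc3 {F : Type*} [Field F] (β : Finset ℕ → F) :
    cobound β {1,2,3,5} = β {2,3,5} - β {1,3,5} + β {1,2,5} - β {1,2,3} := by
  rw [cobound]
  rw [Finset.sum_insert (by decide), Finset.sum_insert (by decide), Finset.sum_insert (by decide), Finset.sum_singleton]
  norm_num [show Finset.filter (fun y => y = 0) ({1,2,3,5}:Finset ℕ) = ∅ from by decide, show Finset.filter (fun y => y < 1) ({1,2,3,5}:Finset ℕ) = ∅ from by decide, show Finset.filter (fun y => y < 2) ({1,2,3,5}:Finset ℕ) = {1} from by decide, show Finset.filter (fun y => y < 3) ({1,2,3,5}:Finset ℕ) = {1,2} from by decide, show Finset.filter (fun y => y < 5) ({1,2,3,5}:Finset ℕ) = {1,2,3} from by decide, show ({1,2,3,5}:Finset ℕ).erase 1 = {2,3,5} from by decide, show ({1,2,3,5}:Finset ℕ).erase 2 = {1,3,5} from by decide, show ({1,2,3,5}:Finset ℕ).erase 3 = {1,2,5} from by decide, show ({1,2,3,5}:Finset ℕ).erase 5 = {1,2,3} from by decide]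
  norm_num [Finset.filter_insert, Finset.filter_singleton]
  ring

lemma hc4 {F : Type*} [Field F] (β : Finset ℕ → F) :
    cobound β {1,2,3,4} = β {2,3,4} - β {1,3,4} + β {1,2,4} - β {1,2,3} := by
  rw [cobound]
  rw [Finset.sum_insert (by decide), Finset.sum_insert (by decide), Finset.sum_insert (by decide), Finset.sum_singleton]
  norm_num [show Finset.filter (fun y => y = 0) ({1,2,3,4}:Finset ℕ) = ∅ from by decide, show Finset.filter (fun y => y < 1) ({1,2,3,4}:Finset ℕ) = ∅ from by decide, show Finset.filter (fun y => y < 2) ({1,2,3,4}:Finset ℕ) = {1} from by decide, show Finset.filter (fun y => y < 3) ({1,2,3,4}:Finset ℕ) = {1,2} from by decide, show Finset.filter (fun y => y < 4) ({1,2,3,4}:Finset ℕ) = {1,2,3} from by decide, show ({1,2,3,4}:Finset ℕ).erase 1 = {2,3,4} from by decide, show ({1,2,3,4}:Finset ℕ).erase 2 = {1,3,4} from by decide, show ({1,2,3,4}:Finset ℕ).erase 3 = {1,2,4} from by decide, show ({1,2,3,4}:Finset ℕ).erase 4 = {1,2,3} from by decide]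
  norm_num [Finset.filter_insert, Finset.filter_singleton]
  ring

lemma hp123 {F : Type*} [Field F] (ω : Finset ℕ → F) :
    pentV ω ![1,2,3,4,5] {1,2,3} = ![0, wOmit ω ![1,2,3,4,5] 1, wOmit ω ![1,2,3,4,5] 3 - wOmit ω ![1,2,3,4,5] 4] := by
  rw [pentV]
  rw [if_pos (by decide)]

lemma hp124 {F : Type*} [Field F] (ω : Finset ℕ → F) :
    pentV ω ![1,2,3,4,5] {1,2,4} = ![0, 0, -wOmit ω ![1,2,3,4,5] 3] := by
  rw [pentV]
  rw [if_neg (by decide), if_pos (by decide)]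

lemma hp125 {F : Type*} [Field F] (ω : Finset ℕ → F) :
    pentV ω ![1,2,3,4,5] {1,2,5} = ![0, -wOmit ω ![1,2,3,4,5] 1, wOmit ω ![1,2,3,4,5] 4] := by
  rw [pentV]
  rw [if_neg (by decide), if_neg (by decide), if_pos (by decide)]

lemma hp134 {F : Type*} [Field F] (ω : Finset ℕ → F) :
    pentV ω ![1,2,3,4,5] {1,3,4} = ![wOmit ω ![1,2,3,4,5] 0, -wOmit ω ![1,2,3,4,5] 3, wOmit ω ![1,2,3,4,5] 3] := by
  rw [pentV]
  rw [if_neg (by decide), if_neg (by decide), if_neg (by decide), if_pos (by decide)]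

lemma hp135 {F : Type*} [Field F] (ω : Finset ℕ → F) :
    pentV ω ![1,2,3,4,5] {1,3,5} = ![-wOmit ω ![1,2,3,4,5] 0, wOmit ω ![1,2,3,4,5] 1 + wOmit ω ![1,2,3,4,5] 3, -wOmit ω ![1,2,3,4,5] 4] := by
  rw [pentV]
  rw [if_neg (by decide), if_neg (by decide), if_neg (by decide), if_neg (by decide), if_pos (by decide)]

lemma hp145 {F : Type*} [Field F] (ω : Finset ℕ → F) :
    pentV ω ![1,2,3,4,5] {1,4,5} = ![wOmit ω ![1,2,3,4,5] 0, -wOmit ω ![1,2,3,4,5] 3, 0] := by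
  rw [pentV]
  rw [if_neg (by decide), if_neg (by decide), if_neg (by decide), if_neg (by decide), if_neg (by decide), if_pos (by decide)]

lemma hp234 {F : Type*} [Field F] (ω : Finset ℕ → F) :
    pentV ω ![1,2,3,4,5] {2,3,4} = ![-wOmit ω ![1,2,3,4,5] 1, 0, -wOmit ω ![1,2,3,4,5] 3] := by
  rw [pentV]
  rw [if_neg (by decide), if_neg (by decide), if_neg (by decide), if_neg (by decide), if_neg (by decide), if_neg (by decide), if_pos (by decide)]

lemma hp235 {F : Type*} [Field F] (ω : Finset ℕ → F) :
    pentV ω ![1,2,3,4,5] {2,3,5} = ![wOmit ω ![1,2,3,4,5] 1, -wOmit ω ![1,2,3,4,5] 1, wOmit ω ![1,2,3,4,5] 4] := by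
  rw [pentV]
  rw [if_neg (by decide), if_neg (by decide), if_neg (by decide), if_neg (by decide), if_neg (by decide), if_neg (by decide), if_neg (by decide), if_pos (by decide)]

lemma hp245 {F : Type*} [Field F] (ω : Finset ℕ → F) :
    pentV ω ![1,2,3,4,5] {2,4,5} = ![-wOmit ω ![1,2,3,4,5] 1, 0, 0] := by
  rw [pentV]
  rw [if_neg (by decide), if_neg (by decide), if_neg (by decide), if_neg (by decide), if_neg (by decide), if_neg (by decide), if_neg (by decide), if_neg (by decide), if_pos (by decide)]

lemma hp345 {F : Type*} [Field F] (ω : Finset ℕ → F) :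
    pentV ω ![1,2,3,4,5] {3,4,5} = ![wOmit ω ![1,2,3,4,5] 1 - wOmit ω ![1,2,3,4,5] 0, wOmit ω ![1,2,3,4,5] 3, 0] := by
  rw [pentV]
  rw [if_neg (by decide), if_neg (by decide), if_neg (by decide), if_neg (by decide), if_neg (by decide), if_neg (by decide), if_neg (by decide), if_neg (by decide), if_neg (by decide), if_pos (by decide)]


/-- the triangle vectors of the pentachoron `12345` built from
`ω = ∂β` are orthogonal to the 2-cochain `β`. -/
theorem statement1 (F : Type*) [Field F] (β : Finset ℕ → F) :
    ∑ s ∈ Finset.powersetCard 3 (Finset.Icc 1 5),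
      β s • pentV (cobound β) ![1,2,3,4,5] s = 0 := by
  have h : Finset.powersetCard 3 (Finset.Icc 1 5) =
      ({{1,2,3},{1,2,4},{1,2,5},{1,3,4},{1,3,5},{1,4,5},{2,3,4},{2,3,5},{2,4,5},{3,4,5}} : Finset (Finset ℕ)) := by decide
  rw [h]
  rw [Finset.sum_insert (by decide), Finset.sum_insert (by decide), Finset.sum_insert (by decide), Finset.sum_insert (by decide), Finset.sum_insert (by decide), Finset.sum_insert (by decide), Finset.sum_insert (by decide), Finset.sum_insert (by decide), Finset.sum_insert (by decide), Finset.sum_singleton]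
  funext i
  simp only [hp123, hp124, hp125, hp134, hp135, hp145, hp234, hp235, hp245, hp345, hw0, hw1, hw3, hw4, hc0, hc1, hc3, hc4, Pi.add_apply, Pi.zero_apply,
    Pi.smul_apply, smul_eq_mul]
  fin_cases i <;>
    simp only [Fin.mk_zero, Fin.mk_one, show (⟨2, by omega⟩ : Fin 3) = 2 from rfl,
      Matrix.cons_val_zero, Matrix.cons_val_one, Matrix.head_cons, Matrix.cons_val_two,
      Matrix.tail_cons] <;>
    ring
end
end

section
/- For any field F and any 2-cochain γ on {1,...,5} such that all five values of ω := ∂γ are nonzero, the triangle functionals f_s of the pentachoron 12345 built from ω satisfy Σ_s γ_s f_s = 0 (as linear forms on F^3), the sum running over all ten triangles s of {1,...,5}. -/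
open Finset

noncomputable section

lemma eW1234 {F : Type*} [Field F] (γ : Finset ℕ → F) :
    cobound γ ({1,2,3,4} : Finset ℕ) = γ {2,3,4} - γ {1,3,4} + γ {1,2,4} - γ {1,2,3} := by
  unfold cobound
  rw [Finset.sum_insert (by decide), Finset.sum_insert (by decide),
      Finset.sum_insert (by decide), Finset.sum_singleton]
  simp only [show Finset.erase ({1,2,3,4} : Finset ℕ) 1 = {2,3,4} from by decide,
    show Finset.erase ({1,2,3,4} : Finset ℕ) 2 = {1,3,4} from by decide,
    show Finset.erase ({1,2,3,4} : Finset ℕ) 3 = {1,2,4} from by decide,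
    show Finset.erase ({1,2,3,4} : Finset ℕ) 4 = {1,2,3} from by decide,
    show (Finset.filter (fun y => y < 1) ({1,2,3,4} : Finset ℕ)).card = 0 from by decide,
    show (Finset.filter (fun y => y < 2) ({1,2,3,4} : Finset ℕ)).card = 1 from by decide,
    show (Finset.filter (fun y => y < 3) ({1,2,3,4} : Finset ℕ)).card = 2 from by decide,
    show (Finset.filter (fun y => y < 4) ({1,2,3,4} : Finset ℕ)).card = 3 from by decide]
  norm_num
  ring

lemma eW1235 {F : Type*} [Field F] (γ : Finset ℕ → F) :
    cobound γ ({1,2,3,5} : Finset ℕ) = γ {2,3,5} - γ {1,3,5} + γ {1,2,5} - γ {1,2,3} := by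
  unfold cobound
  rw [Finset.sum_insert (by decide), Finset.sum_insert (by decide),
      Finset.sum_insert (by decide), Finset.sum_singleton]
  simp only [show Finset.erase ({1,2,3,5} : Finset ℕ) 1 = {2,3,5} from by decide,
    show Finset.erase ({1,2,3,5} : Finset ℕ) 2 = {1,3,5} from by decide,
    show Finset.erase ({1,2,3,5} : Finset ℕ) 3 = {1,2,5} from by decide,
    show Finset.erase ({1,2,3,5} : Finset ℕ) 5 = {1,2,3} from by decide,
    show (Finset.filter (fun y => y < 1) ({1,2,3,5} : Finset ℕ)).card = 0 from by decide,
    show (Finset.filter (fun y => y < 2) ({1,2,3,5} : Finset ℕ)).card = 1 from by decide,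
    show (Finset.filter (fun y => y < 3) ({1,2,3,5} : Finset ℕ)).card = 2 from by decide,
    show (Finset.filter (fun y => y < 5) ({1,2,3,5} : Finset ℕ)).card = 3 from by decide]
  norm_num
  ring

lemma eW1245 {F : Type*} [Field F] (γ : Finset ℕ → F) :
    cobound γ ({1,2,4,5} : Finset ℕ) = γ {2,4,5} - γ {1,4,5} + γ {1,2,5} - γ {1,2,4} := by
  unfold cobound
  rw [Finset.sum_insert (by decide), Finset.sum_insert (by decide),
      Finset.sum_insert (by decide), Finset.sum_singleton]
  simp only [show Finset.erase ({1,2,4,5} : Finset ℕ) 1 = {2,4,5} from by decide,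
    show Finset.erase ({1,2,4,5} : Finset ℕ) 2 = {1,4,5} from by decide,
    show Finset.erase ({1,2,4,5} : Finset ℕ) 4 = {1,2,5} from by decide,
    show Finset.erase ({1,2,4,5} : Finset ℕ) 5 = {1,2,4} from by decide,
    show (Finset.filter (fun y => y < 1) ({1,2,4,5} : Finset ℕ)).card = 0 from by decide,
    show (Finset.filter (fun y => y < 2) ({1,2,4,5} : Finset ℕ)).card = 1 from by decide,
    show (Finset.filter (fun y => y < 4) ({1,2,4,5} : Finset ℕ)).card = 2 from by decide,
    show (Finset.filter (fun y => y < 5) ({1,2,4,5} : Finset ℕ)).card = 3 from by decide]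
  norm_num
  ring

lemma eW1345 {F : Type*} [Field F] (γ : Finset ℕ → F) :
    cobound γ ({1,3,4,5} : Finset ℕ) = γ {3,4,5} - γ {1,4,5} + γ {1,3,5} - γ {1,3,4} := by
  unfold cobound
  rw [Finset.sum_insert (by decide), Finset.sum_insert (by decide),
      Finset.sum_insert (by decide), Finset.sum_singleton]
  simp only [show Finset.erase ({1,3,4,5} : Finset ℕ) 1 = {3,4,5} from by decide,
    show Finset.erase ({1,3,4,5} : Finset ℕ) 3 = {1,4,5} from by decide,
    show Finset.erase ({1,3,4,5} : Finset ℕ) 4 = {1,3,5} from by decide,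
    show Finset.erase ({1,3,4,5} : Finset ℕ) 5 = {1,3,4} from by decide,
    show (Finset.filter (fun y => y < 1) ({1,3,4,5} : Finset ℕ)).card = 0 from by decide,
    show (Finset.filter (fun y => y < 3) ({1,3,4,5} : Finset ℕ)).card = 1 from by decide,
    show (Finset.filter (fun y => y < 4) ({1,3,4,5} : Finset ℕ)).card = 2 from by decide,
    show (Finset.filter (fun y => y < 5) ({1,3,4,5} : Finset ℕ)).card = 3 from by decide]
  norm_num
  ring

lemma eW2345 {F : Type*} [Field F] (γ : Finset ℕ → F) :
    cobound γ ({2,3,4,5} : Finset ℕ) = γ {3,4,5} - γ {2,4,5} + γ {2,3,5} - γ {2,3,4} := by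
  unfold cobound
  rw [Finset.sum_insert (by decide), Finset.sum_insert (by decide),
      Finset.sum_insert (by decide), Finset.sum_singleton]
  simp only [show Finset.erase ({2,3,4,5} : Finset ℕ) 2 = {3,4,5} from by decide,
    show Finset.erase ({2,3,4,5} : Finset ℕ) 3 = {2,4,5} from by decide,
    show Finset.erase ({2,3,4,5} : Finset ℕ) 4 = {2,3,5} from by decide,
    show Finset.erase ({2,3,4,5} : Finset ℕ) 5 = {2,3,4} from by decide,
    show (Finset.filter (fun y => y < 2) ({2,3,4,5} : Finset ℕ)).card = 0 from by decide,
    show (Finset.filter (fun y => y < 3) ({2,3,4,5} : Finset ℕ)).card = 1 from by decide,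
    show (Finset.filter (fun y => y < 4) ({2,3,4,5} : Finset ℕ)).card = 2 from by decide,
    show (Finset.filter (fun y => y < 5) ({2,3,4,5} : Finset ℕ)).card = 3 from by decide]
  norm_num
  ring

lemma eF123 {F : Type*} [Field F] (ω : Finset ℕ → F) :
    pentF ω ![1,2,3,4,5] ({1,2,3} : Finset ℕ) = ![0, 0, 1 / (wOmit ω ![1,2,3,4,5] 4 * wOmit ω ![1,2,3,4,5] 3)] := by
  unfold pentF
  rw [if_pos (by decide)]

lemma eF124 {F : Type*} [Field F] (ω : Finset ℕ → F) :
    pentF ω ![1,2,3,4,5] ({1,2,4} : Finset ℕ) = ![1 / (wOmit ω ![1,2,3,4,5] 2 * wOmit ω ![1,2,3,4,5] 1), -((wOmit ω ![1,2,3,4,5] 1 - wOmit ω ![1,2,3,4,5] 0) / (wOmit ω ![1,2,3,4,5] 3 * wOmit ω ![1,2,3,4,5] 2 * wOmit ω ![1,2,3,4,5] 1)), -((wOmit ω ![1,2,3,4,5] 2 + wOmit ω ![1,2,3,4,5] 4) / (wOmit ω ![1,2,3,4,5] 4 * wOmit ω ![1,2,3,4,5] 3 * wOmit ω ![1,2,3,4,5]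 2))] := by
  unfold pentF
  rw [if_neg (by decide), if_pos (by decide)]

lemma eF125 {F : Type*} [Field F] (ω : Finset ℕ → F) :
    pentF ω ![1,2,3,4,5] ({1,2,5} : Finset ℕ) = ![-(1 / (wOmit ω ![1,2,3,4,5] 2 * wOmit ω ![1,2,3,4,5] 1)), (wOmit ω ![1,2,3,4,5] 1 - wOmit ω ![1,2,3,4,5] 0) / (wOmit ω ![1,2,3,4,5] 3 * wOmit ω ![1,2,3,4,5] 2 * wOmit ω ![1,2,3,4,5] 1), 1 / (wOmit ω ![1,2,3,4,5] 3 * wOmit ω ![1,2,3,4,5] 2)] := by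
  unfold pentF
  rw [if_neg (by decide), if_neg (by decide), if_pos (by decide)]

lemma eF134 {F : Type*} [Field F] (ω : Finset ℕ → F) :
    pentF ω ![1,2,3,4,5] ({1,3,4} : Finset ℕ) = ![0, 1 / (wOmit ω ![1,2,3,4,5] 3 * wOmit ω ![1,2,3,4,5] 1), 1 / (wOmit ω ![1,2,3,4,5] 4 * wOmit ω ![1,2,3,4,5] 3)] := by
  unfold pentF
  rw [if_neg (by decide), if_neg (by decide), if_neg (by decide), if_pos (by decide)]

lemma eF135 {F : Type*} [Field F] (ω : Finset ℕ → F) :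
    pentF ω ![1,2,3,4,5] ({1,3,5} : Finset ℕ) = ![0, -(1 / (wOmit ω ![1,2,3,4,5] 3 * wOmit ω ![1,2,3,4,5] 1)), 0] := by
  unfold pentF
  rw [if_neg (by decide), if_neg (by decide), if_neg (by decide), if_neg (by decide), if_pos (by decide)]

lemma eF145 {F : Type*} [Field F] (ω : Finset ℕ → F) :
    pentF ω ![1,2,3,4,5] ({1,4,5} : Finset ℕ) = ![1 / (wOmit ω ![1,2,3,4,5] 2 * wOmit ω ![1,2,3,4,5] 1), (wOmit ω ![1,2,3,4,5] 3 - wOmit ω ![1,2,3,4,5] 4) / (wOmit ω ![1,2,3,4,5] 3 * wOmit ω ![1,2,3,4,5] 2 * wOmit ω ![1,2,3,4,5] 1), -(1 / (wOmit ω ![1,2,3,4,5] 3 * wOmit ω ![1,2,3,4,5] 2))] := by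
  unfold pentF
  rw [if_neg (by decide), if_neg (by decide), if_neg (by decide), if_neg (by decide), if_neg (by decide), if_pos (by decide)]

lemma eF234 {F : Type*} [Field F] (ω : Finset ℕ → F) :
    pentF ω ![1,2,3,4,5] ({2,3,4} : Finset ℕ) = ![-(1 / (wOmit ω ![1,2,3,4,5] 1 * wOmit ω ![1,2,3,4,5] 0)), -(1 / (wOmit ω ![1,2,3,4,5] 3 * wOmit ω ![1,2,3,4,5] 1)), -(1 / (wOmit ω ![1,2,3,4,5] 4 * wOmit ω ![1,2,3,4,5] 3))] := by
  unfold pentF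
  rw [if_neg (by decide), if_neg (by decide), if_neg (by decide), if_neg (by decide), if_neg (by decide), if_neg (by decide), if_pos (by decide)]

lemma eF235 {F : Type*} [Field F] (ω : Finset ℕ → F) :
    pentF ω ![1,2,3,4,5] ({2,3,5} : Finset ℕ) = ![1 / (wOmit ω ![1,2,3,4,5] 1 * wOmit ω ![1,2,3,4,5] 0), 1 / (wOmit ω ![1,2,3,4,5] 3 * wOmit ω ![1,2,3,4,5] 1), 0] := by
  unfold pentF
  rw [if_neg (by decide), if_neg (by decide), if_neg (by decide), if_neg (by decide), if_neg (by decide), if_neg (by decide), if_neg (by decide), if_pos (by decide)]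

lemma eF245 {F : Type*} [Field F] (ω : Finset ℕ → F) :
    pentF ω ![1,2,3,4,5] ({2,4,5} : Finset ℕ) = ![-((wOmit ω ![1,2,3,4,5] 0 + wOmit ω ![1,2,3,4,5] 2) / (wOmit ω ![1,2,3,4,5] 2 * wOmit ω ![1,2,3,4,5] 1 * wOmit ω ![1,2,3,4,5] 0)), -((wOmit ω ![1,2,3,4,5] 3 - wOmit ω ![1,2,3,4,5] 4) / (wOmit ω ![1,2,3,4,5] 3 * wOmit ω ![1,2,3,4,5] 2 * wOmit ω ![1,2,3,4,5] 1)), 1 / (wOmit ω ![1,2,3,4,5] 3 * wOmit ω ![1,2,3,4,5] 2)] := by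
  unfold pentF
  rw [if_neg (by decide), if_neg (by decide), if_neg (by decide), if_neg (by decide), if_neg (by decide), if_neg (by decide), if_neg (by decide), if_neg (by decide), if_pos (by decide)]

lemma eF345 {F : Type*} [Field F] (ω : Finset ℕ → F) :
    pentF ω ![1,2,3,4,5] ({3,4,5} : Finset ℕ) = ![1 / (wOmit ω ![1,2,3,4,5] 1 * wOmit ω ![1,2,3,4,5] 0), 0, 0] := by
  unfold pentF
  rw [if_neg (by decide), if_neg (by decide), if_neg (by decide), if_neg (by decide), if_neg (by decide), if_neg (by decide), if_neg (by decide), if_neg (by decide), if_neg (by decide), if_pos (by decide)]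

set_option maxHeartbeats 2000000 in
/-- the triangle functionals of the pentachoron `12345` built from
`ω = ∂γ` are orthogonal to the 2-cochain `γ`. -/
theorem statement5 (F : Type*) [Field F] (γ : Finset ℕ → F)
    (hω : ∀ t ∈ Finset.powersetCard 4 (Finset.Icc 1 5), cobound γ t ≠ 0) :
    ∑ s ∈ Finset.powersetCard 3 (Finset.Icc 1 5),
      γ s • pentF (cobound γ) ![1,2,3,4,5] s = 0 := by
  have hpc : Finset.powersetCard 3 (Finset.Icc 1 5)
      = ({{1,2,3},{1,2,4},{1,2,5},{1,3,4},{1,3,5},{1,4,5},{2,3,4},{2,3,5},{2,4,5},{3,4,5}}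
        : Finset (Finset ℕ)) := by decide
  rw [hpc]
  rw [Finset.sum_insert (by decide), Finset.sum_insert (by decide), Finset.sum_insert (by decide),
      Finset.sum_insert (by decide), Finset.sum_insert (by decide), Finset.sum_insert (by decide),
      Finset.sum_insert (by decide), Finset.sum_insert (by decide), Finset.sum_insert (by decide),
      Finset.sum_singleton]
  rw [eF123 (cobound γ), eF124 (cobound γ), eF125 (cobound γ), eF134 (cobound γ),
      eF135 (cobound γ), eF145 (cobound γ), eF234 (cobound γ), eF235 (cobound γ),
      eF245 (cobound γ), eF345 (cobound γ)]
  have h0 : wOmit (cobound γ) ![1,2,3,4,5] 0 ≠ 0 := hω ({2,3,4,5} : Finset ℕ) (by decide)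
  have hw0 : wOmit (cobound γ) ![1,2,3,4,5] 0 = cobound γ ({2,3,4,5} : Finset ℕ) := rfl
  have h1 : wOmit (cobound γ) ![1,2,3,4,5] 1 ≠ 0 := hω ({1,3,4,5} : Finset ℕ) (by decide)
  have hw1 : wOmit (cobound γ) ![1,2,3,4,5] 1 = cobound γ ({1,3,4,5} : Finset ℕ) := rfl
  have h2 : wOmit (cobound γ) ![1,2,3,4,5] 2 ≠ 0 := hω ({1,2,4,5} : Finset ℕ) (by decide)
  have hw2 : wOmit (cobound γ) ![1,2,3,4,5] 2 = cobound γ ({1,2,4,5} : Finset ℕ) := rfl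
  have h3 : wOmit (cobound γ) ![1,2,3,4,5] 3 ≠ 0 := hω ({1,2,3,5} : Finset ℕ) (by decide)
  have hw3 : wOmit (cobound γ) ![1,2,3,4,5] 3 = cobound γ ({1,2,3,5} : Finset ℕ) := rfl
  have h4 : wOmit (cobound γ) ![1,2,3,4,5] 4 ≠ 0 := hω ({1,2,3,4} : Finset ℕ) (by decide)
  have hw4 : wOmit (cobound γ) ![1,2,3,4,5] 4 = cobound γ ({1,2,3,4} : Finset ℕ) := rfl
  obtain ⟨g123, hg123⟩ : ∃ x, γ ({1,2,3} : Finset ℕ) = x := ⟨_, rfl⟩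
  obtain ⟨g124, hg124⟩ : ∃ x, γ ({1,2,4} : Finset ℕ) = x := ⟨_, rfl⟩
  obtain ⟨g125, hg125⟩ : ∃ x, γ ({1,2,5} : Finset ℕ) = x := ⟨_, rfl⟩
  obtain ⟨g134, hg134⟩ : ∃ x, γ ({1,3,4} : Finset ℕ) = x := ⟨_, rfl⟩
  obtain ⟨g135, hg135⟩ : ∃ x, γ ({1,3,5} : Finset ℕ) = x := ⟨_, rfl⟩
  obtain ⟨g145, hg145⟩ : ∃ x, γ ({1,4,5} : Finset ℕ) = x := ⟨_, rfl⟩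
  obtain ⟨g234, hg234⟩ : ∃ x, γ ({2,3,4} : Finset ℕ) = x := ⟨_, rfl⟩
  obtain ⟨g235, hg235⟩ : ∃ x, γ ({2,3,5} : Finset ℕ) = x := ⟨_, rfl⟩
  obtain ⟨g245, hg245⟩ : ∃ x, γ ({2,4,5} : Finset ℕ) = x := ⟨_, rfl⟩
  obtain ⟨g345, hg345⟩ : ∃ x, γ ({3,4,5} : Finset ℕ) = x := ⟨_, rfl⟩
  obtain ⟨W0, hW0⟩ : ∃ x, cobound γ ({2,3,4,5} : Finset ℕ) = x := ⟨_, rfl⟩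
  obtain ⟨W1, hW1⟩ : ∃ x, cobound γ ({1,3,4,5} : Finset ℕ) = x := ⟨_, rfl⟩
  obtain ⟨W2, hW2⟩ : ∃ x, cobound γ ({1,2,4,5} : Finset ℕ) = x := ⟨_, rfl⟩
  obtain ⟨W3, hW3⟩ : ∃ x, cobound γ ({1,2,3,5} : Finset ℕ) = x := ⟨_, rfl⟩
  obtain ⟨W4, hW4⟩ : ∃ x, cobound γ ({1,2,3,4} : Finset ℕ) = x := ⟨_, rfl⟩
  have hE0 : W0 = g345 - g245 + g235 - g234 := by
    rw [← hW0, eW2345 γ, hg345, hg245, hg235, hg234]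
  have hE1 : W1 = g345 - g145 + g135 - g134 := by
    rw [← hW1, eW1345 γ, hg345, hg145, hg135, hg134]
  have hE2 : W2 = g245 - g145 + g125 - g124 := by
    rw [← hW2, eW1245 γ, hg245, hg145, hg125, hg124]
  have hE3 : W3 = g235 - g135 + g125 - g123 := by
    rw [← hW3, eW1235 γ, hg235, hg135, hg125, hg123]
  have hE4 : W4 = g234 - g134 + g124 - g123 := by
    rw [← hW4, eW1234 γ, hg234, hg134, hg124, hg123]
  rw [hw0, hW0] at h0; rw [hw1, hW1] at h1; rw [hw2, hW2] at h2; rw [hw3, hW3] at h3; rw [hw4, hW4] at h4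
  rw [hw0, hw1, hw2, hw3, hw4]
  rw [hg123, hg124, hg125, hg134, hg135, hg145, hg234, hg235, hg245, hg345,
      hW0, hW1, hW2, hW3, hW4]
  funext i
  fin_cases i
  · simp [Pi.add_apply, Pi.smul_apply, Pi.zero_apply, smul_eq_mul]
    linear_combination (W1⁻¹ - g245 * (W1⁻¹ * W2⁻¹)) * mul_inv_cancel₀ h0
      + (-W1⁻¹ - g245 * (W0⁻¹ * W1⁻¹)) * mul_inv_cancel₀ h2
      + (W1⁻¹ * W2⁻¹) * hE2 - (W0⁻¹ * W1⁻¹) * hE0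
  · simp [Pi.add_apply, Pi.smul_apply, Pi.zero_apply, smul_eq_mul]
    linear_combination (g124 - g125) * (W1⁻¹ * W2⁻¹ * W3⁻¹) * hE0
      + (g125 - g124) * (W1⁻¹ * W2⁻¹ * W3⁻¹) * hE1
      + (g145 - g245) * (W1⁻¹ * W2⁻¹ * W3⁻¹) * hE3
      + (g245 - g145) * (W1⁻¹ * W2⁻¹ * W3⁻¹) * hE4
      + (-W3⁻¹ + (g245 - g145 + g125 - g124) * (W2⁻¹ * W3⁻¹)) * mul_inv_cancel₀ h1
      + (-(-W3⁻¹ + (g245 - g145 + g125 - g124) * (W2⁻¹ * W3⁻¹)) * W1⁻¹) * hE1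
      + (W3⁻¹ + (-g345 - g235 + g234 + g145) * (W1⁻¹ * W3⁻¹)) * mul_inv_cancel₀ h2
      + (-(W3⁻¹ + (-g345 - g235 + g234 + g145) * (W1⁻¹ * W3⁻¹)) * W2⁻¹) * hE2
  · simp [Pi.add_apply, Pi.smul_apply, Pi.zero_apply, smul_eq_mul]
    linear_combination (W3⁻¹ - g124 * (W3⁻¹ * W4⁻¹)) * mul_inv_cancel₀ h2
      + (-W3⁻¹ - g124 * (W2⁻¹ * W3⁻¹)) * mul_inv_cancel₀ h4
      + (W3⁻¹ * W4⁻¹) * hE4 - (W2⁻¹ * W3⁻¹) * hE2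
end
end

section
/- For any field F and any function ω from 4-element subsets of {1,...,7} to F, every coloring of K lying in the linear span of the thirty-four triangle vectors E_s of K extends, by a suitable assignment of colors to the inner pentachora, to a permitted coloring of the left-hand side L of the Pachner move 3–4, and likewise extends to a permitted coloring of the right-hand side R. (Every V-coloring of the common boundary is a permitted coloring.) -/
open Finset

noncomputable section

/-- The pentachoron face of the 5-simplex with ordered vertices `v`
obtained by omitting the vertex at position `r`. -/
def face6 (v : Fin 6 → ℕ) (r : Fin 6) : Fin 5 → ℕ := fun p => v (r.succAbove p)

/-- The vertex set of a pentachoron. -/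
def pentSet (v : Fin 5 → ℕ) : Finset ℕ := Finset.image v Finset.univ

/-- The vertex set of the `r`-th pentachoron face of the 5-simplex `v`. -/
def faceSet (v : Fin 6 → ℕ) (r : Fin 6) : Finset ℕ := Finset.image (face6 v r) Finset.univ

/-- The triangle vector `E_s` of the boundary of the 5-simplex with ordered
vertices `v`: its component on the face omitting position `r` is the triangle
vector `e_s` of that face if `s` is one of its triangles, and `0` otherwise. -/
def Esimp {F : Type*} [Field F] (ω : Finset ℕ → F) (v : Fin 6 → ℕ) (s : Finset ℕ) :
    Fin 6 → Fin 3 → F :=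
  fun r => pentV ω (face6 v r) s

/-- The twelve pentachora of the common boundary `K` of the two sides of the
five-dimensional Pachner move 3–4 on the vertices `1, …, 7`. -/
def P34 : Fin 12 → Fin 5 → ℕ :=
  ![![1,2,3,5,6], ![1,2,4,5,6], ![1,3,4,5,6], ![2,3,4,5,6],
    ![1,2,3,5,7], ![1,2,4,5,7], ![1,3,4,5,7], ![2,3,4,5,7],
    ![1,2,3,6,7], ![1,2,4,6,7], ![1,3,4,6,7], ![2,3,4,6,7]]

/-- The sign `σ(u) = ε_i · (-1)^{r+1}` of each pentachoron `u` of `K`, where `u` is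
obtained by omitting the `r`-th vertex of the 5-simplex `v_i` (with
`v_1 = 123456`, `v_2 = 123457`, `v_3 = 123467` carrying the chain coefficients
`ε_1 = +1`, `ε_2 = -1`, `ε_3 = +1`). -/
def sigma34 : Fin 12 → ℤ := ![-1, 1, -1, 1, 1, -1, 1, -1, -1, 1, -1, 1]

/-- The thirty-four triangles of `K`: all 3-element subsets of `{1, …, 7}`
except `{5, 6, 7}`. -/
def T34 : Finset (Finset ℕ) :=
  (Finset.powersetCard 3 (Finset.Icc 1 7)).erase {5, 6, 7}

/-- The triangle vector `E_s` of `K`: its component on a pentachoron `u` of `K`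
is the triangle vector `e_s` of `u` if `s ⊂ u`, and `0` otherwise. -/
def Evec34 {F : Type*} [Field F] (ω : Finset ℕ → F) (s : Finset ℕ) :
    Fin 12 → Fin 3 → F :=
  fun u => pentV ω (P34 u) s

/-- The triangle functional `Φ_s` of `K`: `Φ_s(c) = ∑_{u ⊃ s} σ(u) f_s^{(u)}(c_u)`
(the terms with `s ⊄ u` vanish since then `f_s^{(u)} = 0`). -/
def Phi34 {F : Type*} [Field F] (ω : Finset ℕ → F) (s : Finset ℕ)
    (c : Fin 12 → Fin 3 → F) : F :=
  ∑ u : Fin 12, ((sigma34 u : ℤ) : F) * ∑ i : Fin 3, pentF ω (P34 u) s i * c u i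

/-- A coloring of the six pentachoron faces of the 5-simplex with ordered
vertices `v` is permitted if it lies in the linear span of the twenty triangle
vectors `E_s` of the boundary of `v`. -/
def permitted {F : Type*} [Field F] (ω : Finset ℕ → F) (v : Fin 6 → ℕ)
    (c : Fin 6 → Fin 3 → F) : Prop :=
  c ∈ Submodule.span F
    {x | ∃ s ∈ Finset.powersetCard 3 (Finset.image v Finset.univ), x = Esimp ω v s}

/-- The three 5-simplices of the left-hand side `L` of the Pachner move 3–4. -/
def vL : Fin 3 → Fin 6 → ℕ :=
  ![![1,2,3,4,5,6], ![1,2,3,4,5,7], ![1,2,3,4,6,7]]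

/-- The four 5-simplices of the right-hand side `R` of the Pachner move 3–4. -/
def vR : Fin 4 → Fin 6 → ℕ :=
  ![![1,2,3,5,6,7], ![1,2,4,5,6,7], ![1,3,4,5,6,7], ![2,3,4,5,6,7]]

/-- A permitted coloring of the left-hand side `L` of the Pachner move 3–4:
an assignment of a color to each pentachoron (identified with its vertex set)
whose restriction to the six faces of each 5-simplex of `L` is permitted. -/
def permittedL {F : Type*} [Field F] (ω : Finset ℕ → F) (g : Finset ℕ → Fin 3 → F) : Prop :=
  ∀ i : Fin 3, permitted ω (vL i) (fun r => g (faceSet (vL i) r))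

/-- A permitted coloring of the right-hand side `R` of the Pachner move 3–4. -/
def permittedR {F : Type*} [Field F] (ω : Finset ℕ → F) (g : Finset ℕ → Fin 3 → F) : Prop :=
  ∀ i : Fin 4, permitted ω (vR i) (fun r => g (faceSet (vR i) r))

/-- Auxiliary: the ordered vertices of a pentachoron with vertex set `t ⊆ {0,…,7}`. -/
def vert5 (t : Finset ℕ) : Fin 5 → ℕ := fun i => ((List.range 8).filter (· ∈ t)).getD i 0

lemma vert5_pentSet : ∀ u : Fin 12, vert5 (pentSet (P34 u)) = P34 u := by decide

lemma vert5_faceL : ∀ (i : Fin 3) (r : Fin 6),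
    vert5 (faceSet (vL i) r) = face6 (vL i) r := by decide

lemma vert5_faceR : ∀ (i : Fin 4) (r : Fin 6),
    vert5 (faceSet (vR i) r) = face6 (vR i) r := by decide

lemma pentV_eq_zero {F : Type*} [Field F] (ω : Finset ℕ → F) (v : Fin 5 → ℕ)
    (s : Finset ℕ) (h : ¬ s ⊆ Finset.image v Finset.univ) : pentV ω v s = 0 := by
  have hv : ∀ a b c : Fin 5, ({v a, v b, v c} : Finset ℕ) ⊆ Finset.image v Finset.univ := by
    intro a b c x hx
    simp only [Finset.mem_insert, Finset.mem_singleton] at hx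
    rcases hx with rfl | rfl | rfl <;> exact Finset.mem_image_of_mem v (Finset.mem_univ _)
  have H : ∀ a b c : Fin 5, ¬ (s = {v a, v b, v c}) :=
    fun a b c hs => h (hs.symm ▸ hv a b c)
  unfold pentV
  rw [if_neg (H 0 1 2), if_neg (H 0 1 3), if_neg (H 0 1 4), if_neg (H 0 2 3),
    if_neg (H 0 2 4), if_neg (H 0 3 4), if_neg (H 1 2 3), if_neg (H 1 2 4),
    if_neg (H 1 3 4), if_neg (H 2 3 4)]

lemma faceImage_subset (v : Fin 6 → ℕ) (r : Fin 6) :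
    Finset.image (face6 v r) Finset.univ ⊆ Finset.image v Finset.univ := by
  intro x hx
  simp only [Finset.mem_image, Finset.mem_univ, true_and] at hx ⊢
  obtain ⟨p, hp⟩ := hx
  exact ⟨r.succAbove p, hp⟩

lemma extend34 {F : Type*} [Field F] (ω : Finset ℕ → F) {n : ℕ} (vS : Fin n → Fin 6 → ℕ)
    (hfs : ∀ i r, vert5 (faceSet (vS i) r) = face6 (vS i) r)
    (c : Fin 12 → Fin 3 → F)
    (hc : c ∈ Submodule.span F {x | ∃ s ∈ T34, x = Evec34 ω s}) :
    ∃ g : Finset ℕ → Fin 3 → F,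
      (∀ i, permitted ω (vS i) (fun r => g (faceSet (vS i) r))) ∧
      ∀ u : Fin 12, g (pentSet (P34 u)) = c u := by
  induction hc using Submodule.span_induction with
  | mem x hx =>
    obtain ⟨s, hs, rfl⟩ := hx
    have hcard : s.card = 3 :=
      (Finset.mem_powersetCard.mp (Finset.mem_erase.mp hs).2).2
    refine ⟨fun t => pentV ω (vert5 t) s, ?_, ?_⟩
    · intro i
      by_cases hsub : s ⊆ Finset.image (vS i) Finset.univ
      · have he : (fun r => pentV ω (vert5 (faceSet (vS i) r)) s) = Esimp ω (vS i) s := by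
          funext r; rw [hfs]; rfl
        rw [he]
        exact Submodule.subset_span
          ⟨s, Finset.mem_powersetCard.mpr ⟨hsub, hcard⟩, rfl⟩
      · have he : (fun r => pentV ω (vert5 (faceSet (vS i) r)) s)
            = (0 : Fin 6 → Fin 3 → F) := by
          funext r
          rw [hfs]
          exact pentV_eq_zero ω _ s
            (fun hss => hsub (hss.trans (faceImage_subset (vS i) r)))
        rw [show (fun r => pentV ω (vert5 (faceSet (vS i) r)) s) = _ from he]
        exact Submodule.zero_mem _
    · intro u
      show pentV ω (vert5 (pentSet (P34 u))) s = Evec34 ω s u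
      rw [vert5_pentSet]; rfl
  | zero =>
    refine ⟨0, fun i => ?_, fun u => rfl⟩
    have he : (fun r => (0 : Finset ℕ → Fin 3 → F) (faceSet (vS i) r))
        = (0 : Fin 6 → Fin 3 → F) := rfl
    rw [permitted, he]
    exact Submodule.zero_mem _
  | add x y hx hy ihx ihy =>
    obtain ⟨g1, hp1, he1⟩ := ihx
    obtain ⟨g2, hp2, he2⟩ := ihy
    refine ⟨g1 + g2, fun i => ?_, fun u => ?_⟩
    · exact add_mem (hp1 i) (hp2 i)
    · show g1 (pentSet (P34 u)) + g2 (pentSet (P34 u)) = x u + y u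
      rw [he1, he2]
  | smul a x hx ihx =>
    obtain ⟨g, hp, he⟩ := ihx
    refine ⟨a • g, fun i => ?_, fun u => ?_⟩
    · exact Submodule.smul_mem _ a (hp i)
    · show a • g (pentSet (P34 u)) = a • x u
      rw [he]

/-- every V-coloring of the common boundary `K` of the two sides of
the Pachner move 3–4 extends to a permitted coloring of the left-hand side `L`,
and likewise to a permitted coloring of the right-hand side `R`. -/
theorem statement15 (F : Type*) [Field F] (ω : Finset ℕ → F)
    (c : Fin 12 → Fin 3 → F)
    (hc : c ∈ Submodule.span F {x | ∃ s ∈ T34, x = Evec34 ω s}) :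
    (∃ g : Finset ℕ → Fin 3 → F, permittedL ω g ∧
      ∀ u : Fin 12, g (pentSet (P34 u)) = c u) ∧
    (∃ g : Finset ℕ → Fin 3 → F, permittedR ω g ∧
      ∀ u : Fin 12, g (pentSet (P34 u)) = c u) := by
  exact ⟨extend34 ω vL vert5_faceL c hc, extend34 ω vR vert5_faceR c hc⟩
end
end
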